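/- arXiv:2301.01192 — 10 statements merged into one kernel-verified Lean document; each statement's English description precedes it below -/
import Mathlib

section
/- A picture fuzzy number (PFN) is a triple ⟨μ, η, ν⟩ of reals in [0,1] with μ + η + ν ≤ 1. If α₁ = ⟨μ₁, η₁, ν₁⟩ and α₂ = ⟨μ₂, η₂, ν₂⟩ are PFNs, T is a t-norm on [0,1], and S(x,y) = 1 - T(1-x, 1-y) is its dual t-conorm, then the triple α₁ ⊕ α₂ := ⟨S(μ₁,μ₂), T(η₁+ν₁, η₂+ν₂) - T(ν₁,ν₂), T(ν₁,ν₂)⟩ is again a PFN; i.e., all three components lie in [0,1] and their sum is at most 1. -/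
open Set

/-- A picture fuzzy number: a triple (μ, η, ν) ∈ [0,1]³ with μ + η + ν ≤ 1. -/
def IsPFN (a : ℝ × ℝ × ℝ) : Prop :=
  a.1 ∈ Icc (0:ℝ) 1 ∧ a.2.1 ∈ Icc (0:ℝ) 1 ∧ a.2.2 ∈ Icc (0:ℝ) 1 ∧
    a.1 + a.2.1 + a.2.2 ≤ 1

/-- A t-norm on [0,1]: commutative, associative, monotone, with unit 1. -/
structure IsTNorm (T : ℝ → ℝ → ℝ) : Prop where
  maps_to : ∀ x ∈ Icc (0:ℝ) 1, ∀ y ∈ Icc (0:ℝ) 1, T x y ∈ Icc (0:ℝ) 1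
  comm : ∀ x ∈ Icc (0:ℝ) 1, ∀ y ∈ Icc (0:ℝ) 1, T x y = T y x
  assoc : ∀ x ∈ Icc (0:ℝ) 1, ∀ y ∈ Icc (0:ℝ) 1, ∀ z ∈ Icc (0:ℝ) 1,
    T (T x y) z = T x (T y z)
  mono : ∀ x ∈ Icc (0:ℝ) 1, ∀ y ∈ Icc (0:ℝ) 1, ∀ z ∈ Icc (0:ℝ) 1,
    x ≤ y → T x z ≤ T y z
  one_left : ∀ x ∈ Icc (0:ℝ) 1, T 1 x = x

lemma tnorm_mono2 {T : ℝ → ℝ → ℝ} (hT : IsTNorm T)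
    {a b c d : ℝ} (ha : a ∈ Icc (0:ℝ) 1) (hb : b ∈ Icc (0:ℝ) 1)
    (hc : c ∈ Icc (0:ℝ) 1) (hd : d ∈ Icc (0:ℝ) 1)
    (hac : a ≤ c) (hbd : b ≤ d) : T a b ≤ T c d := by
  calc T a b ≤ T c b := hT.mono a ha c hc b hb hac
    _ = T b c := hT.comm c hc b hb
    _ ≤ T d c := hT.mono b hb d hd c hc hbd
    _ = T c d := hT.comm d hd c hc

/-- closure of PFNs under the t-norm-induced addition `⊕`. -/
theorem pfn_oplus_isPFN (T : ℝ → ℝ → ℝ) (hT : IsTNorm T)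
    (μ₁ η₁ ν₁ μ₂ η₂ ν₂ : ℝ)
    (h₁ : IsPFN (μ₁, η₁, ν₁)) (h₂ : IsPFN (μ₂, η₂, ν₂)) :
    IsPFN (1 - T (1 - μ₁) (1 - μ₂),
           T (η₁ + ν₁) (η₂ + ν₂) - T ν₁ ν₂,
           T ν₁ ν₂) := by
  obtain ⟨hμ₁, hη₁, hν₁, hs₁⟩ := h₁
  obtain ⟨hμ₂, hη₂, hν₂, hs₂⟩ := h₂
  simp only [mem_Icc] at hs₁ hs₂ hμ₁ hη₁ hν₁ hμ₂ hη₂ hν₂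
  have h1μ₁ : (1 - μ₁) ∈ Icc (0:ℝ) 1 := ⟨by linarith [hμ₁.2], by linarith [hμ₁.1]⟩
  have h1μ₂ : (1 - μ₂) ∈ Icc (0:ℝ) 1 := ⟨by linarith [hμ₂.2], by linarith [hμ₂.1]⟩
  have hη352 : (η₁ + ν₁) ∈ Icc (0:ℝ) 1 :=
    ⟨by linarith [hη₁.1, hν₁.1], by linarith [hμ₁.1]⟩
  have hηησ : (η₂ + ν₂) ∈ Icc (0:ℝ) 1 :=
    ⟨by linarith [hη₂.1, hν₂.1], by linarith [hμ₂.1]⟩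
  have hν₁' : ν₁ ∈ Icc (0:ℝ) 1 := ⟨hν₁.1, hν₁.2⟩
  have hν₂' : ν₂ ∈ Icc (0:ℝ) 1 := ⟨hν₂.1, hν₂.2⟩
  have hTμ := hT.maps_to _ h1μ₁ _ h1μ₂
  have hTηη := hT.maps_to _ hη352 _ hηησ
  have hTν := hT.maps_to _ hν₁' _ hν₂'
  simp only [mem_Icc] at hTμ hTν hTηη
  have hle1 : T ν₁ ν₂ ≤ T (η₁ + ν₁) (η₂ + ν₂) :=
    tnorm_mono2 hT hν₁' hν₂' hη352 hηησ (by linarith [hη₁.1]) (by linarith [hη₂.1])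
  have hle2 : T (η₁ + ν₁) (η₂ + ν₂) ≤ T (1 - μ₁) (1 - μ₂) :=
    tnorm_mono2 hT hη352 hηησ h1μ₁ h1μ₂ (by linarith) (by linarith)
  refine ⟨⟨by simp; linarith, by simp; linarith⟩,
    ⟨by simp; linarith, by simp; linarith⟩,
    ⟨by simp; linarith, by simp; linarith⟩, by simp; linarith⟩
end

section
/- If α₁ = ⟨μ₁, η₁, ν₁⟩ and α₂ = ⟨μ₂, η₂, ν₂⟩ are picture fuzzy numbers, T is a t-norm on [0,1], and S is its dual t-conorm, then the triple α₁ ⊗ α₂ := ⟨T(μ₁,μ₂), T(η₁+μ₁, η₂+μ₂) - T(μ₁,μ₂), S(ν₁,ν₂)⟩ is again a picture fuzzy number. -/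
open Set

/-- Monotonicity of a t-norm in both arguments. -/
lemma tnorm_mono2_s1 {T : ℝ → ℝ → ℝ} (hT : IsTNorm T)
    {x y x' y' : ℝ} (hx : x ∈ Icc (0:ℝ) 1) (hy : y ∈ Icc (0:ℝ) 1)
    (hx' : x' ∈ Icc (0:ℝ) 1) (hy' : y' ∈ Icc (0:ℝ) 1)
    (h1 : x ≤ x') (h2 : y ≤ y') : T x y ≤ T x' y' := by
  calc T x y ≤ T x' y := hT.mono x hx x' hx' y hy h1
    _ = T y x' := hT.comm x' hx' y hy
    _ ≤ T y' x' := hT.mono y hy y' hy' x' hx' h2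
    _ = T x' y' := hT.comm y' hy' x' hx'

/-- closure of PFNs under the t-norm-induced product `⊗`. -/
theorem pfn_otimes_isPFN (T : ℝ → ℝ → ℝ) (hT : IsTNorm T)
    (μ₁ η₁ ν₁ μ₂ η₂ ν₂ : ℝ)
    (h₁ : IsPFN (μ₁, η₁, ν₁)) (h₂ : IsPFN (μ₂, η₂, ν₂)) :
    IsPFN (T μ₁ μ₂,
           T (η₁ + μ₁) (η₂ + μ₂) - T μ₁ μ₂,
           1 - T (1 - ν₁) (1 - ν₂)) := by
  obtain ⟨hμ₁, hη₁, hν₁, hs₁⟩ := h₁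
  obtain ⟨hμ₂, hη₂, hν₂, hs₂⟩ := h₂
  simp only [mem_Icc] at *
  have hem₁ : η₁ + μ₁ ∈ Icc (0:ℝ) 1 := ⟨by linarith [hη₁.1, hμ₁.1], by linarith [hν₁.1]⟩
  have hem₂ : η₂ + μ₂ ∈ Icc (0:ℝ) 1 := ⟨by linarith [hη₂.1, hμ₂.1], by linarith [hν₂.1]⟩
  have hnv₁ : 1 - ν₁ ∈ Icc (0:ℝ) 1 := ⟨by linarith [hν₁.2], by linarith [hν₁.1]⟩
  have hnv₂ : 1 - ν₂ ∈ Icc (0:ℝ) 1 := ⟨by linarith [hν₂.2], by linarith [hν₂.1]⟩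
  have hμ₁' : μ₁ ∈ Icc (0:ℝ) 1 := hμ₁
  have hμ₂' : μ₂ ∈ Icc (0:ℝ) 1 := hμ₂
  have hTμ := hT.maps_to μ₁ hμ₁' μ₂ hμ₂'
  have hTe := hT.maps_to _ hem₁ _ hem₂
  have hTν := hT.maps_to _ hnv₁ _ hnv₂
  have hle : T μ₁ μ₂ ≤ T (η₁ + μ₁) (η₂ + μ₂) :=
    tnorm_mono2_s1 hT hμ₁' hμ₂' hem₁ hem₂ (by linarith [hη₁.1]) (by linarith [hη₂.1])
  have hle2 : T (η₁ + μ₁) (η₂ + μ₂) ≤ T (1 - ν₁) (1 - ν₂) :=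
    tnorm_mono2_s1 hT hem₁ hem₂ hnv₁ hnv₂ (by linarith) (by linarith)
  simp only [IsPFN, mem_Icc] at hTμ hTe hTν ⊢
  refine ⟨hTμ, ⟨by linarith, by linarith⟩, ⟨by linarith, by linarith⟩, by linarith⟩
end

section
/- Let τ : [0,1] → [0,+∞] be a continuous strictly decreasing function with τ(1)=0 and τ(0)=+∞ (an additive generator of a strict t-norm), let ζ(x) = τ(1-x), and let λ > 0. If α = ⟨μ, η, ν⟩ is a picture fuzzy number, then λ·α := ⟨ζ⁻¹(λ·ζ(μ)), τ⁻¹(λ·τ(η+ν)) - τ⁻¹(λ·τ(ν)), τ⁻¹(λ·τ(ν))⟩ is again a picture fuzzy number. -/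
open Set ENNReal

/-- `τ : [0,1] → [0,∞]` is an additive generator of a strict t-norm:
a continuous strictly decreasing bijection with `τ 1 = 0`, `τ 0 = ∞`;
`σ` is its inverse (taking values in `[0,1]`). -/
structure IsStrictGenerator (τ : ℝ → ℝ≥0∞) (σ : ℝ≥0∞ → ℝ) : Prop where
  anti : StrictAntiOn τ (Icc (0:ℝ) 1)
  cont : ContinuousOn τ (Icc (0:ℝ) 1)
  map_one : τ 1 = 0
  map_zero : τ 0 = ⊤
  left_inv : ∀ x ∈ Icc (0:ℝ) 1, σ (τ x) = x
  right_inv : ∀ y, τ (σ y) = y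
  mem : ∀ y, σ y ∈ Icc (0:ℝ) 1

/-- `ζ x = τ (1 - x)`, an additive generator of the dual t-conorm. -/
noncomputable def zeta (τ : ℝ → ℝ≥0∞) (x : ℝ) : ℝ≥0∞ := τ (1 - x)

/-- `ζ⁻¹ y = 1 - σ y`, the inverse of `ζ`. -/
noncomputable def zetaInv (σ : ℝ≥0∞ → ℝ) (y : ℝ≥0∞) : ℝ := 1 - σ y

/-- The PFN addition `α ⊕ β` induced by the strict t-norm with generator `τ`. -/
noncomputable def oplusG (τ : ℝ → ℝ≥0∞) (σ : ℝ≥0∞ → ℝ) (a b : ℝ × ℝ × ℝ) :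
    ℝ × ℝ × ℝ :=
  (zetaInv σ (zeta τ a.1 + zeta τ b.1),
   σ (τ (a.2.1 + a.2.2) + τ (b.2.1 + b.2.2)) - σ (τ a.2.2 + τ b.2.2),
   σ (τ a.2.2 + τ b.2.2))

/-- The PFN product `α ⊗ β` induced by the strict t-norm with generator `τ`. -/
noncomputable def otimesG (τ : ℝ → ℝ≥0∞) (σ : ℝ≥0∞ → ℝ) (a b : ℝ × ℝ × ℝ) :
    ℝ × ℝ × ℝ :=
  (σ (τ a.1 + τ b.1),
   σ (τ (a.2.1 + a.1) + τ (b.2.1 + b.1)) - σ (τ a.1 + τ b.1),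
   zetaInv σ (zeta τ a.2.2 + zeta τ b.2.2))

/-- Scalar multiplication `λ · α` of a PFN triple. -/
noncomputable def smulG (τ : ℝ → ℝ≥0∞) (σ : ℝ≥0∞ → ℝ) (l : ℝ) (a : ℝ × ℝ × ℝ) :
    ℝ × ℝ × ℝ :=
  (zetaInv σ (ENNReal.ofReal l * zeta τ a.1),
   σ (ENNReal.ofReal l * τ (a.2.1 + a.2.2)) - σ (ENNReal.ofReal l * τ a.2.2),
   σ (ENNReal.ofReal l * τ a.2.2))

/-- Power `α ^ λ` of a PFN triple. -/
noncomputable def ppowG (τ : ℝ → ℝ≥0∞) (σ : ℝ≥0∞ → ℝ) (l : ℝ) (a : ℝ × ℝ × ℝ) :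
    ℝ × ℝ × ℝ :=
  (σ (ENNReal.ofReal l * τ a.1),
   σ (ENNReal.ofReal l * τ (a.2.1 + a.1)) - σ (ENNReal.ofReal l * τ a.1),
   zetaInv σ (ENNReal.ofReal l * zeta τ a.2.2))

lemma sigma_anti {τ : ℝ → ℝ≥0∞} {σ : ℝ≥0∞ → ℝ} (hg : IsStrictGenerator τ σ) :
    Antitone σ := by
  intro y1 y2 h
  by_contra hc
  push_neg at hc
  have := hg.anti (hg.mem y1) (hg.mem y2) hc
  rw [hg.right_inv, hg.right_inv] at this
  exact absurd h (not_le.2 this)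

/-- closure of PFNs under scalar multiplication `λ · α`. -/
theorem pfn_smul_isPFN (τ : ℝ → ℝ≥0∞) (σ : ℝ≥0∞ → ℝ)
    (hg : IsStrictGenerator τ σ) (l : ℝ) (hl : 0 < l)
    (a : ℝ × ℝ × ℝ) (ha : IsPFN a) :
    IsPFN (smulG τ σ l a) := by
  obtain ⟨⟨hμ0, hμ1⟩, ⟨hη0, hη1⟩, ⟨hν0, hν1⟩, hsum⟩ := ha
  set L := ENNReal.ofReal l
  obtain ⟨μ, η, ν⟩ := a
  simp only at *
  have hην0 : (0:ℝ) ≤ η + ν := by linarith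
  have hην1 : η + ν ≤ 1 := by linarith
  have h1μ : (1 - μ) ∈ Icc (0:ℝ) 1 := ⟨by linarith, by linarith⟩
  have hτmono : AntitoneOn τ (Icc (0:ℝ) 1) := hg.anti.antitoneOn
  -- σ (L * τ ν) ∈ [0,1] etc.
  have hm1 := hg.mem (L * τ (1 - μ))
  have hm2 := hg.mem (L * τ (η + ν))
  have hm3 := hg.mem (L * τ ν)
  have key1 : τ (η + ν) ≤ τ ν := hτmono ⟨hν0, hν1⟩ ⟨hην0, hην1⟩ (by linarith)
  have key2 : τ (1 - μ) ≤ τ (η + ν) := hτmono ⟨hην0, hην1⟩ h1μ (by linarith)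
  have s1 : σ (L * τ ν) ≤ σ (L * τ (η + ν)) :=
    sigma_anti hg (mul_le_mul_right key1 L)
  have s2 : σ (L * τ (η + ν)) ≤ σ (L * τ (1 - μ)) :=
    sigma_anti hg (mul_le_mul_right key2 L)
  refine ⟨⟨?_, ?_⟩, ⟨?_, ?_⟩, ⟨?_, ?_⟩, ?_⟩ <;>
    simp only [smulG, zetaInv, zeta] <;>
    [linarith [hm1.2]; linarith [hm1.1]; linarith; linarith [hm2.2, hm3.1];
     exact hm3.1; exact hm3.2; linarith [hm1.1]]
end

section
/- Let τ be a continuous strictly decreasing additive generator of a strict t-norm with τ(1)=0, τ(0)=+∞, ζ(x)=τ(1-x), and λ > 0. If α = ⟨μ, η, ν⟩ is a picture fuzzy number, then α^λ := ⟨τ⁻¹(λ·τ(μ)), τ⁻¹(λ·τ(η+μ)) - τ⁻¹(λ·τ(μ)), ζ⁻¹(λ·ζ(ν))⟩ is again a picture fuzzy number. -/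
open Set ENNReal

/-- closure of PFNs under powers `α ^ λ`. -/
theorem pfn_ppow_isPFN (τ : ℝ → ℝ≥0∞) (σ : ℝ≥0∞ → ℝ)
    (hg : IsStrictGenerator τ σ) (l : ℝ) (hl : 0 < l)
    (a : ℝ × ℝ × ℝ) (ha : IsPFN a) :
    IsPFN (ppowG τ σ l a) := by
  obtain ⟨hmu, heta, hnu, hsum⟩ := ha
  have sigma_anti : ∀ x y : ℝ≥0∞, x ≤ y → σ y ≤ σ x := by
    intro x y hxy
    by_contra h
    push_neg at h
    have := hg.anti (hg.mem x) (hg.mem y) h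
    rw [hg.right_inv, hg.right_inv] at this
    exact absurd hxy (not_le.mpr this)
  have tau_anti := hg.anti.antitoneOn
  set μ := a.1 with hμ
  set η := a.2.1 with hη
  set ν := a.2.2 with hν
  have hem : η + μ ∈ Icc (0:ℝ) 1 := ⟨by linarith [hmu.1, heta.1], by linarith [hnu.1]⟩
  have h1ν : (1:ℝ) - ν ∈ Icc (0:ℝ) 1 := ⟨by linarith [hnu.2], by linarith [hnu.1]⟩
  have h1 : τ (η + μ) ≤ τ μ := tau_anti hmu hem (by linarith [heta.1])
  have h2 : τ (1 - ν) ≤ τ (η + μ) := tau_anti hem h1ν (by linarith)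
  have h1' : ENNReal.ofReal l * τ (η + μ) ≤ ENNReal.ofReal l * τ μ :=
    mul_le_mul_right h1 _
  have h2' : ENNReal.ofReal l * τ (1 - ν) ≤ ENNReal.ofReal l * τ (η + μ) :=
    mul_le_mul_right h2 _
  have s1 := sigma_anti _ _ h1'
  have s2 := sigma_anti _ _ h2'
  have m1 := hg.mem (ENNReal.ofReal l * τ μ)
  have m2 := hg.mem (ENNReal.ofReal l * τ (η + μ))
  have m3 := hg.mem (ENNReal.ofReal l * τ (1 - ν))
  refine ⟨m1, ⟨by simp only [ppowG]; constructor <;> [linarith [s1]; linarith [m2.2, m1.1]], ?_, ?_⟩⟩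
  · exact ⟨by simp [ppowG, zetaInv, zeta]; linarith [m3.2], by simp [ppowG, zetaInv, zeta]; linarith [m3.1]⟩
  · show σ _ + (σ _ - σ _) + (1 - σ _) ≤ 1
    simp only [zeta, zetaInv]
    linarith [s2, s1]
end

section
/- For picture fuzzy numbers defined via a strict t-norm T, the addition ⊕ is associative: (α ⊕ β) ⊕ γ = α ⊕ (β ⊕ γ) for all PFNs α, β, γ. -/
open Set

/-- A strict t-norm: a continuous t-norm that is strictly monotone. -/
structure IsStrictTNorm (T : ℝ → ℝ → ℝ) extends IsTNorm T : Prop where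
  cont : ContinuousOn (fun p : ℝ × ℝ => T p.1 p.2) (Icc (0:ℝ) 1 ×ˢ Icc (0:ℝ) 1)
  strict_mono : ∀ x ∈ Icc (0:ℝ) 1, ∀ y ∈ Icc (0:ℝ) 1, ∀ z ∈ Icc (0:ℝ) 1,
    0 < x → y < z → T x y < T x z

/-- Addition of PFN triples induced by the t-norm `T` (with dual t-conorm
`S x y = 1 - T (1-x) (1-y)`). -/
def oplusT (T : ℝ → ℝ → ℝ) (a b : ℝ × ℝ × ℝ) : ℝ × ℝ × ℝ :=
  (1 - T (1 - a.1) (1 - b.1),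
   T (a.2.1 + a.2.2) (b.2.1 + b.2.2) - T a.2.2 b.2.2,
   T a.2.2 b.2.2)

/-- Product of PFN triples induced by the t-norm `T`. -/
def otimesT (T : ℝ → ℝ → ℝ) (a b : ℝ × ℝ × ℝ) : ℝ × ℝ × ℝ :=
  (T a.1 b.1,
   T (a.2.1 + a.1) (b.2.1 + b.1) - T a.1 b.1,
   1 - T (1 - a.2.2) (1 - b.2.2))

/-- associativity of `⊕` on PFNs. -/
theorem pfn_oplus_assoc (T : ℝ → ℝ → ℝ) (hT : IsStrictTNorm T)
    (a b c : ℝ × ℝ × ℝ) (ha : IsPFN a) (hb : IsPFN b) (hc : IsPFN c) :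
    oplusT T (oplusT T a b) c = oplusT T a (oplusT T b c) := by
  obtain ⟨ha1, ha2, ha3, has⟩ := ha
  obtain ⟨hb1, hb2, hb3, hbs⟩ := hb
  obtain ⟨hc1, hc2, hc3, hcs⟩ := hc
  have hsub : ∀ x : ℝ, x ∈ Icc (0:ℝ) 1 → (1 - x) ∈ Icc (0:ℝ) 1 := by
    intro x hx; exact ⟨by linarith [hx.2], by linarith [hx.1]⟩
  have hsa : a.2.1 + a.2.2 ∈ Icc (0:ℝ) 1 :=
    ⟨by linarith [ha2.1, ha3.1], by linarith [ha1.1]⟩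
  have hsb : b.2.1 + b.2.2 ∈ Icc (0:ℝ) 1 :=
    ⟨by linarith [hb2.1, hb3.1], by linarith [hb1.1]⟩
  have hsc : c.2.1 + c.2.2 ∈ Icc (0:ℝ) 1 :=
    ⟨by linarith [hc2.1, hc3.1], by linarith [hc1.1]⟩
  have h1 := hT.assoc _ (hsub _ ha1) _ (hsub _ hb1) _ (hsub _ hc1)
  have h2 := hT.assoc _ hsa _ hsb _ hsc
  have h3 := hT.assoc _ ha3 _ hb3 _ hc3
  simp only [oplusT, sub_sub_cancel, sub_add_cancel, Prod.mk.injEq]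
  refine ⟨by rw [h1], by rw [h2, h3], h3⟩
end

section
/- For picture fuzzy numbers defined via a strict t-norm T, the product ⊗ is associative: (α ⊗ β) ⊗ γ = α ⊗ (β ⊗ γ) for all PFNs α, β, γ. -/
open Set

/-- associativity of `⊗` on PFNs. -/
theorem pfn_otimes_assoc (T : ℝ → ℝ → ℝ) (hT : IsStrictTNorm T)
    (a b c : ℝ × ℝ × ℝ) (ha : IsPFN a) (hb : IsPFN b) (hc : IsPFN c) :
    otimesT T (otimesT T a b) c = otimesT T a (otimesT T b c) := by
  obtain ⟨ha1, ha2, ha3, ha4⟩ := ha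
  obtain ⟨hb1, hb2, hb3, hb4⟩ := hb
  obtain ⟨hc1, hc2, hc3, hc4⟩ := hc
  have hA : a.2.1 + a.1 ∈ Icc (0:ℝ) 1 :=
    ⟨by linarith [ha1.1, ha2.1], by linarith [ha3.1]⟩
  have hB : b.2.1 + b.1 ∈ Icc (0:ℝ) 1 :=
    ⟨by linarith [hb1.1, hb2.1], by linarith [hb3.1]⟩
  have hC : c.2.1 + c.1 ∈ Icc (0:ℝ) 1 :=
    ⟨by linarith [hc1.1, hc2.1], by linarith [hc3.1]⟩
  have hA' : 1 - a.2.2 ∈ Icc (0:ℝ) 1 := ⟨by linarith [ha3.2], by linarith [ha3.1]⟩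
  have hB' : 1 - b.2.2 ∈ Icc (0:ℝ) 1 := ⟨by linarith [hb3.2], by linarith [hb3.1]⟩
  have hC' : 1 - c.2.2 ∈ Icc (0:ℝ) 1 := ⟨by linarith [hc3.2], by linarith [hc3.1]⟩
  simp only [otimesT, Prod.mk.injEq]
  refine ⟨hT.assoc _ ha1 _ hb1 _ hc1, ?_, ?_⟩
  · have e1 : T (a.2.1 + a.1) (b.2.1 + b.1) - T a.1 b.1 + T a.1 b.1
        = T (a.2.1 + a.1) (b.2.1 + b.1) := by ring
    have e2 : T (b.2.1 + b.1) (c.2.1 + c.1) - T b.1 c.1 + T b.1 c.1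
        = T (b.2.1 + b.1) (c.2.1 + c.1) := by ring
    rw [e1, e2, hT.assoc _ hA _ hB _ hC, hT.assoc _ ha1 _ hb1 _ hc1]
  · have e1 : 1 - (1 - T (1 - a.2.2) (1 - b.2.2)) = T (1 - a.2.2) (1 - b.2.2) := by ring
    have e2 : 1 - (1 - T (1 - b.2.2) (1 - c.2.2)) = T (1 - b.2.2) (1 - c.2.2) := by ring
    rw [e1, e2, hT.assoc _ hA' _ hB' _ hC']
end

section
/- Let T be a strict t-norm with additive generator τ and ζ(x)=τ(1-x). For any PFN α and positive reals ξ, λ: (ξ·α) ⊕ (λ·α) = (ξ+λ)·α, where scalar multiplication is λ·α = ⟨ζ⁻¹(λζ(μ)), τ⁻¹(λτ(η+ν)) − τ⁻¹(λτ(ν)), τ⁻¹(λτ(ν))⟩ and ⊕ is the T-based addition of PFNs. -/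
open Set ENNReal

/-- `(ξ·α) ⊕ (λ·α) = (ξ+λ)·α`. -/
theorem pfn_smul_add (τ : ℝ → ℝ≥0∞) (σ : ℝ≥0∞ → ℝ)
    (hg : IsStrictGenerator τ σ) (ξ l : ℝ) (hξ : 0 < ξ) (hl : 0 < l)
    (a : ℝ × ℝ × ℝ) (ha : IsPFN a) :
    oplusG τ σ (smulG τ σ ξ a) (smulG τ σ l a) = smulG τ σ (ξ + l) a := by
  have hri := hg.right_inv
  have hofr : ENNReal.ofReal (ξ + l) = ENNReal.ofReal ξ + ENNReal.ofReal l :=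
    ENNReal.ofReal_add hξ.le hl.le
  simp only [oplusG, smulG, zeta, zetaInv, sub_add_cancel, sub_sub_cancel, hri,
    hofr, add_mul]
  have h2 : ∀ y : ℝ≥0∞, (1:ℝ) - (1 - σ y) = σ y := fun y => by ring
  simp only [h2, hri]
end

section
/- Let T be a strict t-norm with additive generator τ. Scalar multiplication of PFNs distributes over ⊕: λ·(α ⊕ β) = (λ·α) ⊕ (λ·β) for any PFNs α, β and λ > 0. -/
open Set ENNReal

lemma zeta_zetaInv (τ : ℝ → ℝ≥0∞) (σ : ℝ≥0∞ → ℝ) (hg : IsStrictGenerator τ σ)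
    (y : ℝ≥0∞) : zeta τ (zetaInv σ y) = y := by
  simp [zeta, zetaInv, sub_sub_cancel, hg.right_inv]

/-- `λ·(α ⊕ β) = (λ·α) ⊕ (λ·β)`. -/
theorem pfn_smul_oplus (τ : ℝ → ℝ≥0∞) (σ : ℝ≥0∞ → ℝ)
    (hg : IsStrictGenerator τ σ) (l : ℝ) (hl : 0 < l)
    (a b : ℝ × ℝ × ℝ) (ha : IsPFN a) (hb : IsPFN b) :
    smulG τ σ l (oplusG τ σ a b) = oplusG τ σ (smulG τ σ l a) (smulG τ σ l b) := by
  simp only [smulG, oplusG, zeta_zetaInv τ σ hg, sub_add_cancel, hg.right_inv, mul_add]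
end

section
/- Let T be a strict t-norm with additive generator τ. For PFNs, powers distribute over ⊗: (α ⊗ β)^λ = α^λ ⊗ β^λ for any PFNs α, β and λ > 0. -/
open Set ENNReal

/-- `(α ⊗ β)^λ = α^λ ⊗ β^λ`. -/
theorem pfn_ppow_otimes (τ : ℝ → ℝ≥0∞) (σ : ℝ≥0∞ → ℝ)
    (hg : IsStrictGenerator τ σ) (l : ℝ) (hl : 0 < l)
    (a b : ℝ × ℝ × ℝ) (ha : IsPFN a) (hb : IsPFN b) :
    ppowG τ σ l (otimesG τ σ a b) = otimesG τ σ (ppowG τ σ l a) (ppowG τ σ l b) := by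
  have ri := hg.right_inv
  have key : ∀ y : ℝ≥0∞, τ (1 - (1 - σ y)) = y := by
    intro y; rw [show (1:ℝ) - (1 - σ y) = σ y by ring, ri]
  simp only [ppowG, otimesG, zeta, zetaInv, Prod.mk.injEq, sub_add_cancel, ri, key, mul_add]
end

section
/- Let T be a strict t-norm with additive generator τ and ζ(x)=τ(1−x). For PFNs α₁,...,αₙ, the n-fold product satisfies α₁ ⊗ ... ⊗ αₙ = ⟨τ⁻¹(Σᵢ τ(μᵢ)), τ⁻¹(Σᵢ τ(ηᵢ+μᵢ)) − τ⁻¹(Σᵢ τ(μᵢ)), ζ⁻¹(Σᵢ ζ(νᵢ))⟩. -/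
open Set ENNReal

lemma pfn_otimes_aux (τ : ℝ → ℝ≥0∞) (σ : ℝ≥0∞ → ℝ)
    (hg : IsStrictGenerator τ σ) :
    ∀ (l : List (ℝ × ℝ × ℝ)) (s₁ s₂ s₃ : ℝ≥0∞),
    l.foldl (otimesG τ σ) (σ s₁, σ s₂ - σ s₁, 1 - σ s₃) =
      (σ (s₁ + (l.map fun x => τ x.1).sum),
       σ (s₂ + (l.map fun x => τ (x.2.1 + x.1)).sum) -
         σ (s₁ + (l.map fun x => τ x.1).sum),
       1 - σ (s₃ + (l.map fun x => zeta τ x.2.2).sum)) := by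
  intro l
  induction l with
  | nil => simp
  | cons x xs ih =>
    intro s₁ s₂ s₃
    have h1 : otimesG τ σ (σ s₁, σ s₂ - σ s₁, 1 - σ s₃) x =
        (σ (s₁ + τ x.1), σ (s₂ + τ (x.2.1 + x.1)) - σ (s₁ + τ x.1),
         1 - σ (s₃ + zeta τ x.2.2)) := by
      simp only [otimesG, zetaInv, zeta]
      rw [show (σ s₂ - σ s₁) + σ s₁ = σ s₂ by ring,
        show (1:ℝ) - (1 - σ s₃) = σ s₃ by ring, hg.right_inv, hg.right_inv,
        hg.right_inv]
    simp only [List.foldl_cons, h1, ih, List.map_cons, List.sum_cons, add_assoc]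

/-- closed formula for the n-fold product `α₁ ⊗ ⋯ ⊗ αₙ`
(the PFNs being `a :: l`, iterating `⊗` from the left). -/
theorem pfn_iterated_otimes (τ : ℝ → ℝ≥0∞) (σ : ℝ≥0∞ → ℝ)
    (hg : IsStrictGenerator τ σ)
    (a : ℝ × ℝ × ℝ) (l : List (ℝ × ℝ × ℝ))
    (ha : IsPFN a) (hl : ∀ x ∈ l, IsPFN x) :
    l.foldl (otimesG τ σ) a =
      (σ (((a :: l).map fun x => τ x.1).sum),
       σ (((a :: l).map fun x => τ (x.2.1 + x.1)).sum) -
         σ (((a :: l).map fun x => τ x.1).sum),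
       zetaInv σ (((a :: l).map fun x => zeta τ x.2.2).sum)) := by
  obtain ⟨h1, h2, h3, h4⟩ := ha
  have ha1 : σ (τ a.1) = a.1 := hg.left_inv _ h1
  have ha2 : σ (τ (a.2.1 + a.1)) = a.2.1 + a.1 :=
    hg.left_inv _ ⟨by linarith [h1.1, h2.1], by linarith [h3.1]⟩
  have ha3 : σ (zeta τ a.2.2) = 1 - a.2.2 := by
    rw [zeta]; exact hg.left_inv _ ⟨by linarith [h3.2], by linarith [h3.1]⟩
  have : a = (σ (τ a.1), σ (τ (a.2.1 + a.1)) - σ (τ a.1),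
      1 - σ (zeta τ a.2.2)) := by
    rw [ha1, ha2, ha3]
    apply Prod.ext
    · rfl
    · apply Prod.ext <;> simp <;> ring
  conv_lhs => rw [this]
  rw [pfn_otimes_aux τ σ hg]
  simp [zetaInv]
end
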